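/- arXiv:1810.12818 — 7 statements merged into one kernel-verified Lean document; each statement's English description precedes it below -/
import Mathlib

section
/- Let W be an r×r real matrix (r ≥ 1) all of whose entries are strictly positive, and let σ_1, …, σ_r be strictly positive reals. Then the spectral radius of the matrix product W · diag(σ_1, …, σ_r) is strictly less than 1 if and only if there exist γ_1, …, γ_r > 0 such that for every j ∈ {1, …, r}, (σ_j/γ_j²) · Σ_{i=1}^r γ_i² · W_{ij} < 1. -/
/-!
For a nonnegative matrix `M`, `ρ(M) < 1` is equivalent to the existence of a positive vector `v`
with `vᵀ M < vᵀ` componentwise; the theorem is this criterion for `M = W diag(σ)` and `v = γ²`.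

If such a `v` exists and `M x = μ x` with `x ≠ 0`, then `|μ| |x| ≤ M |x|` entrywise, and pairing
with `v` gives `|μ| vᵀ|x| ≤ vᵀ M |x| < vᵀ|x|`, so `|μ| < 1`. Conversely, if `ρ(M) < 1`, Gelfand's
formula makes the Neumann series `N = ∑ Mᵏ` converge, `N` is nonnegative with `N (1 - M) = 1`,
and `v = 1ᵀ N` satisfies `vᵀ M = vᵀ - 1ᵀ` and `v ≥ 1`.
-/

theorem summable_norm_pow_of_spectralRadius_lt_one {A : Type*} [NormedRing A]
    [NormedAlgebra ℂ A] [CompleteSpace A] {a : A} (h : spectralRadius ℂ a < 1) :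
    Summable fun n => ‖a ^ n‖ := by
  obtain ⟨c, hρc, hc1⟩ := ENNReal.lt_iff_exists_nnreal_btwn.mp h
  refine .of_norm_bounded_eventually_nat (summable_geometric_of_lt_one c.2 (mod_cast hc1)) ?_
  filter_upwards [(spectrum.pow_nnnorm_pow_one_div_tendsto_nhds_spectralRadius a).eventually_lt_const
    hρc, Filter.eventually_ne_atTop 0] with n hn hn0
  rw [one_div, ENNReal.rpow_inv_lt_iff (by positivity), ENNReal.rpow_natCast] at hn
  rw [norm_norm]
  exact_mod_cast hn.le

theorem Matrix.dotProduct_lt_dotProduct_of_nonneg_right {n : Type*} [Fintype n] {u v w : n → ℝ}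
    (huv : ∀ i, u i < v i) (hw : 0 ≤ w) (hw0 : w ≠ 0) : u ⬝ᵥ w < v ⬝ᵥ w := by
  obtain ⟨i, hi⟩ := Function.ne_iff.mp hw0
  exact Finset.sum_lt_sum (fun j _ => mul_le_mul_of_nonneg_right (huv j).le (hw j))
    ⟨i, Finset.mem_univ i, mul_lt_mul_of_pos_right (huv i) ((hw i).lt_of_ne' hi)⟩

section LinftyOpNorm

attribute [local instance] Matrix.linftyOpSeminormedAddCommGroup Matrix.linftyOpNormedRing
  Matrix.linftyOpNormedAlgebra

theorem Matrix.norm_entry_le_linfty_opNorm {m n α : Type*} [Fintype m] [Fintype n]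
    [SeminormedAddCommGroup α] (A : Matrix m n α) (i : m) (j : n) : ‖A i j‖ ≤ ‖A‖ := by
  rw [← coe_nnnorm, ← coe_nnnorm, NNReal.coe_le_coe, Matrix.linfty_opNNNorm_def]
  exact (Finset.single_le_sum (fun _ _ => zero_le) (Finset.mem_univ j)).trans
    (Finset.le_sup (f := fun i => ∑ j, ‖A i j‖₊) (Finset.mem_univ i))

theorem Matrix.summable_pow_apply_of_spectralRadius_lt_one {n : Type*} [Fintype n]
    [DecidableEq n] {M : Matrix n n ℝ} (h : spectralRadius ℂ (M.map (Complex.ofReal ·)) < 1)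
    (i j : n) : Summable fun k => (M ^ k) i j := by
  refine .of_norm_bounded (summable_norm_pow_of_spectralRadius_lt_one h) fun k => ?_
  have hpow : M.map (Complex.ofReal ·) ^ k = (M ^ k).map (Complex.ofReal ·) :=
    (Matrix.map_pow M Complex.ofRealHom k).symm
  calc ‖(M ^ k) i j‖ = ‖(M.map (Complex.ofReal ·) ^ k) i j‖ := by
        rw [hpow, Matrix.map_apply, Complex.norm_real]
    _ ≤ ‖M.map (Complex.ofReal ·) ^ k‖ := Matrix.norm_entry_le_linfty_opNorm _ i j

end LinftyOpNorm

namespace Matrix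

variable {n : Type*} [Fintype n] [DecidableEq n]

theorem exists_mulVec_eq_smul_of_mem_spectrum {K : Type*} [Field K] {A : Matrix n n K} {μ : K}
    (h : μ ∈ spectrum K A) : ∃ x ≠ 0, A *ᵥ x = μ • x := by
  rw [spectrum.mem_iff, isUnit_iff_isUnit_det, isUnit_iff_ne_zero, not_not,
    ← exists_mulVec_eq_zero_iff] at h
  obtain ⟨x, hx0, hx⟩ := h
  refine ⟨x, hx0, ?_⟩
  rw [sub_mulVec, Algebra.algebraMap_eq_smul_one, smul_mulVec, one_mulVec, sub_eq_zero] at hx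
  exact hx.symm

theorem norm_lt_one_of_mem_spectrum_of_vecMul_lt {M : Matrix n n ℝ} (hM : ∀ i j, 0 ≤ M i j)
    {v : n → ℝ} (hv : ∀ i, 0 < v i) (hvM : ∀ j, (v ᵥ* M) j < v j) {μ : ℂ}
    (hμ : μ ∈ spectrum ℂ (M.map (Complex.ofReal ·))) : ‖μ‖ < 1 := by
  obtain ⟨x, hx0, hx⟩ := exists_mulVec_eq_smul_of_mem_spectrum hμ
  set y : n → ℝ := fun i => ‖x i‖
  have hy : 0 ≤ y := fun i => norm_nonneg _
  have hy0 : y ≠ 0 := fun h => hx0 <| funext fun i => norm_eq_zero.mp (congrFun h i)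
  have hμy : ‖μ‖ • y ≤ M *ᵥ y := fun j => by
    calc ‖μ‖ * ‖x j‖ = ‖(M.map (Complex.ofReal ·) *ᵥ x) j‖ := by rw [hx]; simp
      _ ≤ ∑ i, ‖(M j i : ℂ) * x i‖ := norm_sum_le _ _
      _ = (M *ᵥ y) j := by simp [y, mulVec, dotProduct, abs_of_nonneg (hM _ _)]
  have hvy : 0 < v ⬝ᵥ y := by
    simpa using dotProduct_lt_dotProduct_of_nonneg_right (u := 0) hv hy hy0
  refine lt_of_mul_lt_mul_right (a := v ⬝ᵥ y) ?_ hvy.le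
  calc ‖μ‖ * (v ⬝ᵥ y) = v ⬝ᵥ (‖μ‖ • y) := by rw [dotProduct_smul, smul_eq_mul]
    _ ≤ v ⬝ᵥ (M *ᵥ y) := dotProduct_le_dotProduct_of_nonneg_left hμy fun i => (hv i).le
    _ = (v ᵥ* M) ⬝ᵥ y := dotProduct_mulVec _ _ _
    _ < 1 * (v ⬝ᵥ y) := by
      rw [one_mul]; exact dotProduct_lt_dotProduct_of_nonneg_right hvM hy hy0

theorem spectralRadius_lt_one_of_vecMul_lt {M : Matrix n n ℝ} (hM : ∀ i j, 0 ≤ M i j)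
    {v : n → ℝ} (hv : ∀ i, 0 < v i) (hvM : ∀ j, (v ᵥ* M) j < v j) :
    spectralRadius ℂ (M.map (Complex.ofReal ·)) < 1 := by
  rcases (spectrum ℂ (M.map (Complex.ofReal ·))).eq_empty_or_nonempty with hS | hS
  · simp [spectralRadius, hS]
  obtain ⟨μ, hμ, hmax⟩ := Set.exists_max_image _ (‖·‖₊) (finite_spectrum _) hS
  exact (iSup₂_le fun ν hν => ENNReal.coe_le_coe.2 (hmax ν hν)).trans_lt
    (mod_cast norm_lt_one_of_mem_spectrum_of_vecMul_lt hM hv hvM hμ)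

theorem exists_pos_vecMul_lt_of_spectralRadius_lt_one {M : Matrix n n ℝ}
    (hM : ∀ i j, 0 ≤ M i j) (h : spectralRadius ℂ (M.map (Complex.ofReal ·)) < 1) :
    ∃ v : n → ℝ, (∀ i, 0 < v i) ∧ ∀ j, (v ᵥ* M) j < v j := by
  have hsum : Summable fun k => M ^ k :=
    Pi.summable.2 fun i => Pi.summable.2 fun j => summable_pow_apply_of_spectralRadius_lt_one h i j
  have hN := hsum.hasSum
  have hinv := hsum.tsum_pow_mul_one_sub
  generalize ∑' k, M ^ k = N at hN hinv
  have hN_nonneg : 0 ≤ 1 ᵥ* N := fun j => Finset.sum_nonneg fun i _ => mul_nonneg zero_le_one <|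
    (Pi.hasSum.1 (Pi.hasSum.1 hN i) j).nonneg fun k => pow_apply_nonneg hM k i j
  have hv : ∀ j, (1 ᵥ* N) j - ((1 ᵥ* N) ᵥ* M) j = 1 := fun j => by
    have := congrFun (congrArg (1 ᵥ* ·) hinv) j
    rwa [← vecMul_vecMul, vecMul_sub, vecMul_one, vecMul_one] at this
  refine ⟨1 ᵥ* N, fun i => ?_, fun j => by linarith [hv j]⟩
  have hvM_nonneg : 0 ≤ ((1 ᵥ* N) ᵥ* M) i :=
    Finset.sum_nonneg fun l _ => mul_nonneg (hN_nonneg l) (hM l i)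
  linarith [hv i]

theorem spectralRadius_lt_one_iff_exists_pos_vecMul_lt {M : Matrix n n ℝ}
    (hM : ∀ i j, 0 ≤ M i j) :
    spectralRadius ℂ (M.map (Complex.ofReal ·)) < 1 ↔
      ∃ v : n → ℝ, (∀ i, 0 < v i) ∧ ∀ j, (v ᵥ* M) j < v j :=
  ⟨exists_pos_vecMul_lt_of_spectralRadius_lt_one hM,
    fun ⟨_, hv, hvM⟩ => spectralRadius_lt_one_of_vecMul_lt hM hv hvM⟩

end Matrix

theorem exists_pos_iff_exists_pos_sq {ι : Type*} {P : (ι → ℝ) → Prop} :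
    (∃ v : ι → ℝ, (∀ i, 0 < v i) ∧ P v) ↔ ∃ γ : ι → ℝ, (∀ i, 0 < γ i) ∧ P (γ ^ 2) := by
  constructor
  · rintro ⟨v, hv, hPv⟩
    refine ⟨fun i => √(v i), fun i => Real.sqrt_pos.2 (hv i), ?_⟩
    convert hPv
    ext i
    exact Real.sq_sqrt (hv i).le
  · rintro ⟨γ, hγ, hPγ⟩
    exact ⟨γ ^ 2, fun i => pow_pos (hγ i) 2, hPγ⟩

theorem stmt1_general {r : ℕ} (W : Matrix (Fin r) (Fin r) ℝ)
    (hW : ∀ i j, 0 < W i j) (σ : Fin r → ℝ) (hσ : ∀ j, 0 < σ j) :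
    spectralRadius ℂ ((W * Matrix.diagonal σ).map (Complex.ofReal ·)) < 1 ↔
      ∃ γ : Fin r → ℝ, (∀ i, 0 < γ i) ∧
        ∀ j, (σ j / (γ j) ^ 2) * ∑ i : Fin r, (γ i) ^ 2 * W i j < 1 := by
  have hM : ∀ i j, 0 ≤ (W * Matrix.diagonal σ) i j := fun i j => by
    rw [Matrix.mul_diagonal]; exact (mul_pos (hW i j) (hσ j)).le
  rw [Matrix.spectralRadius_lt_one_iff_exists_pos_vecMul_lt hM, exists_pos_iff_exists_pos_sq]
  refine exists_congr fun γ => and_congr_right fun hγ => forall_congr' fun j => ?_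
  rw [← Matrix.vecMul_vecMul, Matrix.vecMul_diagonal, div_mul_eq_mul_div,
    div_lt_one (pow_pos (hγ j) 2), mul_comm]
  simp [Matrix.vecMul, dotProduct]

/-- For an `r × r` real matrix `W` (`r ≥ 1`) with all entries strictly positive
and strictly positive reals `σ_1, …, σ_r`, the spectral radius of
`W * diag(σ)` is strictly less than `1` iff there exist `γ_1, …, γ_r > 0` such
that `(σ j / γ j ^ 2) * ∑ i, γ i ^ 2 * W i j < 1` for every `j`. -/
theorem stmt1 {r : ℕ} (hr : 1 ≤ r) (W : Matrix (Fin r) (Fin r) ℝ)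
    (hW : ∀ i j, 0 < W i j) (σ : Fin r → ℝ) (hσ : ∀ j, 0 < σ j) :
    spectralRadius ℂ ((W * Matrix.diagonal σ).map (Complex.ofReal ·)) < 1 ↔
      ∃ γ : Fin r → ℝ, (∀ i, 0 < γ i) ∧
        ∀ j, (σ j / (γ j) ^ 2) * ∑ i : Fin r, (γ i) ^ 2 * W i j < 1 :=
  stmt1_general W hW σ hσ
end

section
/- Let A be an n×n complex matrix, B an n×m complex matrix, C an m×n complex matrix, and D an m×m complex matrix, and suppose the (n+m)×(n+m) block matrix [[A, B], [C, D]] is unitary, i.e. [[Aᴴ, Cᴴ], [Bᴴ, Dᴴ]] · [[A, B], [C, D]] = I. If D is invertible, then A is invertible and A − BD⁻¹C = (Aᴴ)⁻¹. -/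
/-!
A unitary matrix also satisfies `U Uᴴ = 1`; the first block column of that identity reads
`A Aᴴ + B Bᴴ = 1` and `C Aᴴ + D Bᴴ = 0`. Substituting `C Aᴴ = -D Bᴴ` shows that the Schur
complement `A - B D⁻¹ C` is a left inverse of `Aᴴ`.
-/

open Matrix

namespace Matrix

variable {l m n α : Type*} [Fintype m] [Fintype n] [DecidableEq l] [DecidableEq m]

theorem fromBlocks_mul_conjTranspose_eq_one [Fintype l] [CommRing α] [StarRing α]
    {A : Matrix l l α} {B : Matrix l m α} {C : Matrix m l α} {D : Matrix m m α}
    (hU : (fromBlocks A B C D)ᴴ * fromBlocks A B C D = 1) :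
    A * Aᴴ + B * Bᴴ = 1 ∧ C * Aᴴ + D * Bᴴ = 0 := by
  have hU' := mem_unitaryGroup_iff.mp (mem_unitaryGroup_iff'.mpr hU)
  rw [← fromBlocks_one, star_eq_conjTranspose, fromBlocks_conjTranspose, fromBlocks_multiply,
    fromBlocks_inj] at hU'
  exact ⟨hU'.1, hU'.2.2.1⟩

theorem sub_mul_nonsing_inv_mul_mul_eq_one [CommRing α]
    {A : Matrix l n α} {B : Matrix l m α} {C : Matrix m n α} {D : Matrix m m α}
    {X : Matrix n l α} {Y : Matrix m l α}
    (h₁ : A * X + B * Y = 1) (h₂ : C * X + D * Y = 0) (hD : IsUnit D) :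
    (A - B * D⁻¹ * C) * X = 1 :=
  calc (A - B * D⁻¹ * C) * X = A * X - B * D⁻¹ * (C * X) := by
        rw [Matrix.sub_mul, Matrix.mul_assoc (B * D⁻¹)]
    _ = A * X + B * (D⁻¹ * D) * Y := by
        rw [eq_neg_of_add_eq_zero_left h₂, Matrix.mul_neg, sub_neg_eq_add]
        simp only [Matrix.mul_assoc]
    _ = 1 := by rw [nonsing_inv_mul D ((isUnit_iff_isUnit_det D).mp hD), Matrix.mul_one, h₁]

end Matrix

/-- If the block matrix `[[A, B], [C, D]]` is unitary (its conjugate transpose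
times itself is the identity) and `D` is invertible, then `A` is invertible and
`A − B D⁻¹ C = (Aᴴ)⁻¹`. -/
theorem stmt4 {n m : ℕ} (A : Matrix (Fin n) (Fin n) ℂ)
    (B : Matrix (Fin n) (Fin m) ℂ) (C : Matrix (Fin m) (Fin n) ℂ)
    (D : Matrix (Fin m) (Fin m) ℂ)
    (hU : (Matrix.fromBlocks A B C D)ᴴ * Matrix.fromBlocks A B C D = 1)
    (hD : IsUnit D) :
    IsUnit A ∧ A - B * D⁻¹ * C = (Aᴴ)⁻¹ := by
  obtain ⟨h₁, h₂⟩ := fromBlocks_mul_conjTranspose_eq_one hU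
  have hleft : (A - B * D⁻¹ * C) * Aᴴ = 1 := sub_mul_nonsing_inv_mul_mul_eq_one h₁ h₂ hD
  exact ⟨(isUnit_conjTranspose A).mp (IsUnit.of_mul_eq_one_right _ hleft),
    (inv_eq_left_inv hleft).symm⟩
end

section
/- Let A be an n×n complex matrix, B an n×m complex matrix, C an m×n complex matrix, and D an m×m complex matrix, and suppose the (n+m)×(n+m) block matrix [[A, B], [C, D]] is unitary, i.e. [[Aᴴ, Cᴴ], [Bᴴ, Dᴴ]] · [[A, B], [C, D]] = I. If D is invertible, then A is invertible and Cᴴ(Dᴴ)⁻¹D⁻¹C + I = A⁻¹(Aᴴ)⁻¹. -/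
/-!
Unitarity of `[[A, B], [C, D]]` also gives the row relations `A Aᴴ + B Bᴴ = 1` and
`A Cᴴ + B Dᴴ = 0`. When `D` is invertible the second one solves to `B = -A Cᴴ (Dᴴ)⁻¹`,
and substituting into the first yields `A (Cᴴ (Dᴴ)⁻¹ D⁻¹ C + 1) Aᴴ = 1`, which exhibits
both the invertibility of `A` and the claimed formula for `A⁻¹ (Aᴴ)⁻¹`.
-/

open Matrix

namespace Matrix

variable {R : Type*} [CommRing R] {m n : Type*} [Fintype m] [DecidableEq m]

theorem eq_neg_mul_inv_of_add_mul_eq_zero {X B : Matrix n m R} {E : Matrix m m R}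
    (hE : IsUnit E) (h : X + B * E = 0) : B = -(X * E⁻¹) := by
  have hBE : B * E = -X := eq_neg_of_add_eq_zero_right h
  calc B = B * E * E⁻¹ :=
        (mul_nonsing_inv_cancel_right E B ((isUnit_iff_isUnit_det E).mp hE)).symm
    _ = -(X * E⁻¹) := by rw [hBE, Matrix.neg_mul]

theorem eq_inv_mul_inv_of_mul_mul_eq_one {A S E : Matrix m m R} (h : A * (S * E) = 1) :
    S = A⁻¹ * E⁻¹ := by
  have hSEA : S * (E * A) = 1 := by rw [← mul_assoc]; exact mul_eq_one_comm.mp h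
  rw [← mul_inv_rev, inv_eq_left_inv hSEA]

variable [Fintype n] [DecidableEq n] [StarRing R]

theorem row_relations_of_fromBlocks_conjTranspose_mul_self_eq_one
    {A : Matrix n n R} {B : Matrix n m R} {C : Matrix m n R} {D : Matrix m m R}
    (hU : (fromBlocks A B C D)ᴴ * fromBlocks A B C D = 1) :
    A * Aᴴ + B * Bᴴ = 1 ∧ A * Cᴴ + B * Dᴴ = 0 := by
  have hrows := mul_eq_one_comm.mp hU
  rw [fromBlocks_conjTranspose, fromBlocks_multiply, ← fromBlocks_one] at hrows
  obtain ⟨h11, h12, -, -⟩ := fromBlocks_inj.mp hrows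
  exact ⟨h11, h12⟩

theorem mul_mul_conjTranspose_eq_one_of_fromBlocks_conjTranspose_mul_self_eq_one
    {A : Matrix n n R} {B : Matrix n m R} {C : Matrix m n R} {D : Matrix m m R}
    (hU : (fromBlocks A B C D)ᴴ * fromBlocks A B C D = 1) (hD : IsUnit D) :
    A * ((Cᴴ * (Dᴴ)⁻¹ * D⁻¹ * C + 1) * Aᴴ) = 1 := by
  obtain ⟨hAB, hAC⟩ := row_relations_of_fromBlocks_conjTranspose_mul_self_eq_one hU
  have hB : B = -(A * Cᴴ * (Dᴴ)⁻¹) :=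
    eq_neg_mul_inv_of_add_mul_eq_zero ((isUnit_conjTranspose D).mpr hD) hAC
  have hBH : Bᴴ = -(D⁻¹ * C * Aᴴ) := by
    simp only [hB, conjTranspose_neg, conjTranspose_mul, ← conjTranspose_nonsing_inv,
      conjTranspose_conjTranspose, Matrix.mul_assoc]
  calc A * ((Cᴴ * (Dᴴ)⁻¹ * D⁻¹ * C + 1) * Aᴴ) = A * Aᴴ + B * Bᴴ := by
        rw [hBH, hB, Matrix.neg_mul, Matrix.mul_neg, neg_neg, Matrix.add_mul, Matrix.one_mul,
          Matrix.mul_add, add_comm]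
        simp only [Matrix.mul_assoc]
    _ = 1 := hAB

end Matrix

/-- If the block matrix `[[A, B], [C, D]]` is unitary (its conjugate transpose
times itself is the identity) and `D` is invertible, then `A` is invertible and
`Cᴴ (Dᴴ)⁻¹ D⁻¹ C + I = A⁻¹ (Aᴴ)⁻¹`. -/
theorem stmt5 {n m : ℕ} (A : Matrix (Fin n) (Fin n) ℂ)
    (B : Matrix (Fin n) (Fin m) ℂ) (C : Matrix (Fin m) (Fin n) ℂ)
    (D : Matrix (Fin m) (Fin m) ℂ)
    (hU : (Matrix.fromBlocks A B C D)ᴴ * Matrix.fromBlocks A B C D = 1)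
    (hD : IsUnit D) :
    IsUnit A ∧ Cᴴ * (Dᴴ)⁻¹ * D⁻¹ * C + 1 = A⁻¹ * (Aᴴ)⁻¹ := by
  have hA := mul_mul_conjTranspose_eq_one_of_fromBlocks_conjTranspose_mul_self_eq_one hU hD
  exact ⟨IsUnit.of_mul_eq_one _ hA, eq_inv_mul_inv_of_mul_mul_eq_one hA⟩
end

section
/- Let A be an n×n complex matrix, B an n×m complex matrix, C an m×n complex matrix, and D an invertible m×m complex matrix, and suppose the (n+m)×(n+m) block matrix [[A, B], [C, D]] is unitary, i.e. [[Aᴴ, Cᴴ], [Bᴴ, Dᴴ]] · [[A, B], [C, D]] = I. Let z ∈ ℂ be such that zI − A and zI − (Aᴴ)⁻¹ are both invertible. Then D + C(zI − A)⁻¹B is invertible and (D + C(zI − A)⁻¹B)⁻¹ − D⁻¹ = −D⁻¹C(zI − (Aᴴ)⁻¹)⁻¹BD⁻¹. -/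
open Matrix

/-- For a unitary realization block `[[A, B], [C, D]]` with `D` invertible and
`z` such that `zI − A` and `zI − (Aᴴ)⁻¹` are invertible, the matrix
`M(z) = D + C (zI − A)⁻¹ B` is invertible and
`M(z)⁻¹ − D⁻¹ = −D⁻¹ C (zI − (Aᴴ)⁻¹)⁻¹ B D⁻¹`. -/
theorem stmt7 {n m : ℕ} (A : Matrix (Fin n) (Fin n) ℂ)
    (B : Matrix (Fin n) (Fin m) ℂ) (C : Matrix (Fin m) (Fin n) ℂ)
    (D : Matrix (Fin m) (Fin m) ℂ)
    (hU : (Matrix.fromBlocks A B C D)ᴴ * Matrix.fromBlocks A B C D = 1)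
    (hD : IsUnit D) (z : ℂ)
    (h1 : IsUnit (z • (1 : Matrix (Fin n) (Fin n) ℂ) - A))
    (h2 : IsUnit (z • (1 : Matrix (Fin n) (Fin n) ℂ) - (Aᴴ)⁻¹)) :
    IsUnit (D + C * (z • (1 : Matrix (Fin n) (Fin n) ℂ) - A)⁻¹ * B) ∧
      (D + C * (z • (1 : Matrix (Fin n) (Fin n) ℂ) - A)⁻¹ * B)⁻¹ - D⁻¹ =
        -(D⁻¹ * C * (z • (1 : Matrix (Fin n) (Fin n) ℂ) - (Aᴴ)⁻¹)⁻¹ * B * D⁻¹) := by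
  rw [fromBlocks_conjTranspose, fromBlocks_multiply, ← fromBlocks_one] at hU
  have e11 : Aᴴ * A + Cᴴ * C = 1 := congrArg Matrix.toBlocks₁₁ hU
  have e12 : Aᴴ * B + Cᴴ * D = 0 := congrArg Matrix.toBlocks₁₂ hU
  have hB : Aᴴ * B = -(Cᴴ * D) := by linear_combination (norm := noncomm_ring) e12
  have hDD : D * D⁻¹ = 1 := Matrix.mul_nonsing_inv D ((Matrix.isUnit_iff_isUnit_det D).mp hD)
  have hAinv : Aᴴ * (A - B * D⁻¹ * C) = 1 := by
    calc Aᴴ * (A - B * D⁻¹ * C) = Aᴴ * A - Aᴴ * B * (D⁻¹ * C) := by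
          simp only [mul_sub, Matrix.mul_assoc]
    _ = Aᴴ * A - -(Cᴴ * D) * (D⁻¹ * C) := by rw [hB]
    _ = Aᴴ * A + Cᴴ * C := by
          rw [Matrix.neg_mul, sub_neg_eq_add, Matrix.mul_assoc Cᴴ, ← Matrix.mul_assoc D, hDD, Matrix.one_mul]
    _ = 1 := e11
  have hAH : (Aᴴ)⁻¹ = A - B * D⁻¹ * C := Matrix.inv_eq_right_inv hAinv
  set X := z • (1 : Matrix (Fin n) (Fin n) ℂ) - A with hX
  have hmid : X⁻¹⁻¹ + B * D⁻¹ * C = z • (1 : Matrix (Fin n) (Fin n) ℂ) - (Aᴴ)⁻¹ := by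
    rw [Matrix.nonsing_inv_nonsing_inv _ ((Matrix.isUnit_iff_isUnit_det X).mp h1), hAH, hX]
    noncomm_ring
  have hXinv : IsUnit X⁻¹ := (Matrix.isUnit_nonsing_inv_iff).mpr h1
  have h2' : IsUnit (X⁻¹⁻¹ + B * D⁻¹ * C) := hmid ▸ h2
  have hunit : IsUnit (D + C * X⁻¹ * B) := by
    letI iD := hD.invertible
    letI iX := hXinv.invertible
    have e : ⅟X⁻¹ + B * ⅟D * C = X⁻¹⁻¹ + B * D⁻¹ * C := by
      rw [Matrix.invOf_eq_nonsing_inv, Matrix.invOf_eq_nonsing_inv]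
    letI : Invertible (⅟X⁻¹ + B * ⅟D * C) := (e.symm ▸ h2').invertible
    letI := Matrix.invertibleAddMulMul D C X⁻¹ B
    exact isUnit_of_invertible _
  refine ⟨hunit, ?_⟩
  rw [Matrix.add_mul_mul_inv_eq_sub D C X⁻¹ B hD hXinv h2', hmid]
  noncomm_ring
end

section
/- Let A be an n×n complex matrix, B an n×m complex matrix, C an m×n complex matrix, and D an m×m complex matrix, and suppose the (n+m)×(n+m) block matrix [[A, B], [C, D]] is unitary, i.e. [[Aᴴ, Cᴴ], [Bᴴ, Dᴴ]] · [[A, B], [C, D]] = I, and that the row relations also hold (the block matrix times its conjugate transpose equals I). Then for every z ∈ ℂ with |z| = 1 such that zI − A is invertible, the m×m matrix M(z) = C(zI − A)⁻¹B + D is unitary: M(z)ᴴM(z) = I. -/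
/-!
Put `Y = (zI − A)⁻¹ B`. Since `A Y + B = z Y`, the realization block maps the stacked matrix
`[Y; I]` to `[z Y; M(z)]`. Its columns are orthonormal, so it preserves Gram matrices:
`Yᴴ Y + I = |z|² Yᴴ Y + M(z)ᴴ M(z)`, and `|z| = 1` leaves `M(z)ᴴ M(z) = I`.
-/

open Matrix

namespace Matrix

variable {R : Type*} {k l m n : Type*} [Fintype l] [Fintype m] [Fintype n]

theorem conjTranspose_fromRows_mul_fromRows [Semiring R] [StarRing R]
    (P : Matrix l k R) (Q : Matrix m k R) :
    (fromRows P Q)ᴴ * fromRows P Q = Pᴴ * P + Qᴴ * Q := by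
  rw [conjTranspose_fromRows_eq_fromCols_conjTranspose, fromCols_mul_fromRows]

theorem conjTranspose_mul_self_add_of_fromBlocks_isometry [Semiring R] [StarRing R]
    [DecidableEq l] [DecidableEq m] {A : Matrix l l R} {B : Matrix l m R}
    {C : Matrix m l R} {D : Matrix m m R}
    (hisom : (fromBlocks A B C D)ᴴ * fromBlocks A B C D = 1) (P : Matrix l k R)
    (Q : Matrix m k R) :
    (A * P + B * Q)ᴴ * (A * P + B * Q) + (C * P + D * Q)ᴴ * (C * P + D * Q) =
      Pᴴ * P + Qᴴ * Q := by
  rw [← conjTranspose_fromRows_mul_fromRows, ← conjTranspose_fromRows_mul_fromRows,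
    ← fromBlocks_mul_fromRows, conjTranspose_mul, Matrix.mul_assoc,
    ← Matrix.mul_assoc _ (fromBlocks A B C D), hisom, Matrix.one_mul]

theorem mul_nonsing_inv_smul_one_sub [CommRing R] [DecidableEq n] (A : Matrix n n R) (z : R)
    (h : IsUnit (z • (1 : Matrix n n R) - A)) :
    A * (z • (1 : Matrix n n R) - A)⁻¹ = z • (z • (1 : Matrix n n R) - A)⁻¹ - 1 := by
  have := mul_nonsing_inv _ ((isUnit_iff_isUnit_det _).mp h)
  rw [Matrix.sub_mul, smul_mul_assoc, Matrix.one_mul] at this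
  exact eq_sub_of_add_eq (sub_eq_iff_eq_add'.mp this).symm

end Matrix

theorem stmt8_general {n m : ℕ} (A : Matrix (Fin n) (Fin n) ℂ)
    (B : Matrix (Fin n) (Fin m) ℂ) (C : Matrix (Fin m) (Fin n) ℂ)
    (D : Matrix (Fin m) (Fin m) ℂ)
    (hU1 : (Matrix.fromBlocks A B C D)ᴴ * Matrix.fromBlocks A B C D = 1) :
    ∀ z : ℂ, ‖z‖ = 1 → IsUnit (z • (1 : Matrix (Fin n) (Fin n) ℂ) - A) →
      (C * (z • (1 : Matrix (Fin n) (Fin n) ℂ) - A)⁻¹ * B + D)ᴴ *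
        (C * (z • (1 : Matrix (Fin n) (Fin n) ℂ) - A)⁻¹ * B + D) = 1 := by
  intro z hz hF
  set Y := (z • (1 : Matrix (Fin n) (Fin n) ℂ) - A)⁻¹ * B
  have hAY : A * Y + B * (1 : Matrix (Fin m) (Fin m) ℂ) = z • Y := by
    rw [← Matrix.mul_assoc, mul_nonsing_inv_smul_one_sub A z hF, Matrix.sub_mul,
      Matrix.one_mul, Matrix.mul_one, sub_add_cancel, Matrix.smul_mul]
  have hz_sq : star z * z = 1 := by
    rw [Complex.star_def, Complex.conj_mul', hz]; norm_num
  have hgram := conjTranspose_mul_self_add_of_fromBlocks_isometry hU1 Y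
    (1 : Matrix (Fin m) (Fin m) ℂ)
  rw [hAY, conjTranspose_smul, Matrix.smul_mul, Matrix.mul_smul, smul_smul, hz_sq, one_smul,
    Matrix.mul_one D, conjTranspose_one, Matrix.one_mul] at hgram
  rw [Matrix.mul_assoc C]
  exact add_left_cancel hgram

/-- **A transfer function with a unitary realization is inner.**
If the block matrix `[[A, B], [C, D]]` is unitary (both its conjugate transpose
times itself and itself times its conjugate transpose equal the identity), then
for every `z` on the unit circle such that `zI − A` is invertible, the matrix
`M(z) = C (zI − A)⁻¹ B + D` is unitary: `M(z)ᴴ M(z) = I`. -/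
theorem stmt8 {n m : ℕ} (A : Matrix (Fin n) (Fin n) ℂ)
    (B : Matrix (Fin n) (Fin m) ℂ) (C : Matrix (Fin m) (Fin n) ℂ)
    (D : Matrix (Fin m) (Fin m) ℂ)
    (hU1 : (Matrix.fromBlocks A B C D)ᴴ * Matrix.fromBlocks A B C D = 1)
    (hU2 : Matrix.fromBlocks A B C D * (Matrix.fromBlocks A B C D)ᴴ = 1) :
    ∀ z : ℂ, ‖z‖ = 1 → IsUnit (z • (1 : Matrix (Fin n) (Fin n) ℂ) - A) →
      (C * (z • (1 : Matrix (Fin n) (Fin n) ℂ) - A)⁻¹ * B + D)ᴴ *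
        (C * (z • (1 : Matrix (Fin n) (Fin n) ℂ) - A)⁻¹ * B + D) = 1 :=
  stmt8_general A B C D hU1
end

section
/- Let λ and z₁ be real numbers with λ > 1, z₁ > 1 and z₁ ≠ λ. Then (1/2π) ∫_{−π}^{π} (λ² − 1)²/|e^{iθ} − λ|² dθ + (z₁² − 1)·((λ² − 1)/(z₁ − λ))² = (λ² − 1)·((z₁λ − 1)/(z₁ − λ))². -/
/-!
The integrand `(λ² - 1) / |e^{iθ} - λ|²` is the Poisson kernel of the disc of radius `|λ|` at the
point `1`, evaluated at `λ e^{iθ}`; by the Poisson formula for the constant function `1` its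
average over the circle is `1`. What remains is the identity
`(λ² - 1)(z₁² - 1) + (z₁ - λ)² = (z₁λ - 1)²`.
-/

open Complex ComplexConjugate Metric Real

theorem norm_ofReal_mul_sub_one_of_norm_eq_one {u : ℂ} (hu : ‖u‖ = 1) (r : ℝ) :
    ‖r * u - 1‖ = ‖u - r‖ := by
  have hfactor : r * u - 1 = u * (r - conj u) := by
    rw [mul_sub, mul_conj, normSq_eq_norm_sq, hu]; push_cast; ring
  rw [hfactor, norm_mul, hu, one_mul, ← norm_conj, map_sub, conj_ofReal, conj_conj, norm_sub_rev]

theorem poissonKernel_zero_one_circleMap (r θ : ℝ) :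
    poissonKernel 0 1 (circleMap 0 r θ) = (r ^ 2 - 1) / ‖exp (I * θ) - r‖ ^ 2 := by
  simp [poissonKernel, circleMap, mul_comm I,
    norm_ofReal_mul_sub_one_of_norm_eq_one (norm_exp_ofReal_mul_I θ)]

theorem circleAverage_poissonKernel_eq_one {c w : ℂ} {R : ℝ} (hw : w ∈ ball c R) :
    circleAverage (poissonKernel c w) c R = 1 := by
  have h := (diffContOnCl_const (c := (1 : ℂ))).circleAverage_poissonKernel_smul hw
  rw [circleAverage_def] at h ⊢
  simp only [Pi.smul_apply', Complex.real_smul, mul_one, intervalIntegral.integral_ofReal] at h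
  exact_mod_cast h

theorem integral_sq_sub_one_div_norm_exp_mul_I_sub_sq {r : ℝ} (hr : 1 < |r|) :
    ∫ θ in (-π)..π, (r ^ 2 - 1) / ‖exp (I * θ) - r‖ ^ 2 = 2 * π := by
  have hper : Function.Periodic (fun θ ↦ poissonKernel 0 1 (circleMap 0 r θ)) (2 * π) :=
    fun θ ↦ congrArg (poissonKernel 0 1) (periodic_circleMap 0 r θ)
  have havg := circleAverage_poissonKernel_eq_one (c := 0) (w := 1) (R := |r|) (by simpa)
  rw [circleAverage_abs_radius, circleAverage_def, smul_eq_mul] at havg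
  calc ∫ θ in (-π)..π, (r ^ 2 - 1) / ‖exp (I * θ) - r‖ ^ 2
      = ∫ θ in (-π)..(-π + 2 * π), poissonKernel 0 1 (circleMap 0 r θ) := by
        simp_rw [poissonKernel_zero_one_circleMap]; ring_nf
    _ = ∫ θ in 0..2 * π, poissonKernel 0 1 (circleMap 0 r θ) := by
        simpa using hper.intervalIntegral_add_eq (-π) 0
    _ = 2 * π := by field_simp at havg; exact havg

theorem stmt13_general (lam z₁ : ℝ) (hlam : 1 < lam) (hne : z₁ ≠ lam) :
    (1 / (2 * Real.pi)) *
        (∫ θ in (-Real.pi)..Real.pi,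
          (lam ^ 2 - 1) ^ 2 / ‖Complex.exp (Complex.I * θ) - (lam : ℂ)‖ ^ 2)
      + (z₁ ^ 2 - 1) * ((lam ^ 2 - 1) / (z₁ - lam)) ^ 2
      = (lam ^ 2 - 1) * ((z₁ * lam - 1) / (z₁ - lam)) ^ 2 := by
  have hfactor : ∀ θ : ℝ, (lam ^ 2 - 1) ^ 2 / ‖exp (I * θ) - lam‖ ^ 2
      = (lam ^ 2 - 1) * ((lam ^ 2 - 1) / ‖exp (I * θ) - lam‖ ^ 2) := fun θ ↦ by ring
  have hlam' : 1 < |lam| := hlam.trans_le (le_abs_self lam)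
  simp_rw [hfactor, intervalIntegral.integral_const_mul,
    integral_sq_sub_one_div_norm_exp_mul_I_sub_sq hlam']
  have hsub : z₁ - lam ≠ 0 := sub_ne_zero.mpr hne
  field_simp
  ring

/-- For real `λ > 1`, `z₁ > 1` with `z₁ ≠ λ`,
`(1/2π) ∫_{−π}^{π} (λ²−1)²/|e^{iθ}−λ|² dθ + (z₁²−1)·((λ²−1)/(z₁−λ))²
  = (λ²−1)·((z₁λ−1)/(z₁−λ))²`. -/
theorem stmt13 (lam z₁ : ℝ) (hlam : 1 < lam) (hz : 1 < z₁) (hne : z₁ ≠ lam) :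
    (1 / (2 * Real.pi)) *
        (∫ θ in (-Real.pi)..Real.pi,
          (lam ^ 2 - 1) ^ 2 / ‖Complex.exp (Complex.I * θ) - (lam : ℂ)‖ ^ 2)
      + (z₁ ^ 2 - 1) * ((lam ^ 2 - 1) / (z₁ - lam)) ^ 2
      = (lam ^ 2 - 1) * ((z₁ * lam - 1) / (z₁ - lam)) ^ 2 :=
  stmt13_general lam z₁ hlam hne
end

section
/- Let A be an n×n complex matrix all of whose eigenvalues have modulus strictly less than 1, B an n×m complex matrix, C an m×n complex matrix, and D an invertible m×m complex matrix, such that the (n+m)×(n+m) block matrix [[A, B], [C, D]] is unitary (its conjugate transpose times itself equals I, and it times its conjugate transpose equals I). Suppose A is invertible. Let z₀ ∈ ℂ with |z₀| > 1 be such that z₀I − A and z₀I − (Aᴴ)⁻¹ are invertible. Define M(z) = C(zI − A)⁻¹B + D, and let e_j ∈ ℂ^m be the j-th standard basis vector. Then M(e^{iθ}) and M(z₀) are invertible, and (1/2π) ∫_{−π}^{π} ‖(M(e^{iθ})⁻¹ − D⁻¹)e_j‖² dθ + (|z₀|² − 1)·‖(M(z₀)⁻¹ − D⁻¹)e_j‖²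 = e_jᴴ (Dᴴ)⁻¹Bᴴ (z̄₀I − A⁻¹)⁻¹ (z₀A⁻¹ − I)(z̄₀(Aᴴ)⁻¹ − I) (z₀I − (Aᴴ)⁻¹)⁻¹ B D⁻¹ e_j. -/
open MeasureTheory Matrix

/-!
Write `F = (Aᴴ)⁻¹`. Unitarity of the realization gives `F = A - B D⁻¹ C` and `D⁻¹ C = -Bᴴ F`, so
the Woodbury identity yields `M(z)⁻¹ - D⁻¹ = Bᴴ F (zI - F)⁻¹ B D⁻¹`. Put `u = B D⁻¹ e_j` and
`v = (zI - F)⁻¹ u`, so that `F v = z v - u`; since `A Aᴴ + B Bᴴ = I` and `Aᴴ F = I`, the cost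
at `z` is `‖z v - u‖² - ‖v‖²`.

On the unit circle this is `Re (‖u‖² - 2 z ⟪u, v⟫)`, the real part of a function holomorphic on
the closed unit disc (the eigenvalues of `F` lie outside it), so its mean over the circle is its
value `‖u‖²` at `0`. At `z₀` the pointwise identity
`|b|² + (|z|² - 1)(|z a - b|² - |a|²) = |z̄ (z a - b) - a|²` turns `‖u‖² + (|z₀|² - 1) · cost`
into `‖(z̄₀ F - I) v‖²`, which is the right-hand side.
-/

theorem Real.circleAverage_zero_one_eq_integral {E : Type*} [NormedAddCommGroup E]
    [NormedSpace ℝ E] (f : ℂ → E) :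
    Real.circleAverage f 0 1 =
      (2 * Real.pi)⁻¹ • ∫ θ in -Real.pi..Real.pi, f (Complex.exp (Complex.I * θ)) := by
  rw [Real.circleAverage_eq_integral_add (-Real.pi), intervalIntegral.integral_comp_add_right
    (fun θ => f (circleMap 0 1 θ)), zero_add, show 2 * Real.pi + -Real.pi = Real.pi by ring]
  simp [circleMap, mul_comm]

theorem DiffContOnCl.integral_re_comp_exp_mul_I {G : ℂ → ℂ}
    (hG : DiffContOnCl ℂ G (Metric.ball 0 1)) :
    1 / (2 * Real.pi) * ∫ θ in -Real.pi..Real.pi, (G (Complex.exp (Complex.I * θ))).re =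
      (G 0).re := by
  have hint : CircleIntegrable G 0 1 := by
    refine (hG.continuousOn.mono ?_).circleIntegrable zero_le_one
    rw [closure_ball _ one_ne_zero]
    exact Metric.sphere_subset_closedBall
  rw [one_div, ← smul_eq_mul, ← Real.circleAverage_zero_one_eq_integral (fun z => (G z).re)]
  have h := Complex.reCLM.circleAverage_comp_comm hint
  simp only [Function.comp_def, Complex.reCLM_apply] at h
  rw [h, DiffContOnCl.circleAverage (by rwa [abs_one])]

namespace Matrix

section Blocks

variable {l m n o α : Type*} [Semiring α] [Star α]
  {A : Matrix n l α} {B : Matrix n m α} {C : Matrix o l α} {D : Matrix o m α}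

theorem fromBlocks_conjTranspose_mul_self_eq_one_iff [Fintype n] [Fintype o]
    [DecidableEq l] [DecidableEq m] :
    (fromBlocks A B C D)ᴴ * fromBlocks A B C D = 1 ↔
      Aᴴ * A + Cᴴ * C = 1 ∧ Aᴴ * B + Cᴴ * D = 0 ∧ Bᴴ * A + Dᴴ * C = 0 ∧
        Bᴴ * B + Dᴴ * D = 1 := by
  rw [fromBlocks_conjTranspose, fromBlocks_multiply, ← fromBlocks_one, fromBlocks_inj]

theorem fromBlocks_mul_conjTranspose_self_eq_one_iff [Fintype l] [Fintype m]
    [DecidableEq n] [DecidableEq o] :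
    fromBlocks A B C D * (fromBlocks A B C D)ᴴ = 1 ↔
      A * Aᴴ + B * Bᴴ = 1 ∧ A * Cᴴ + B * Dᴴ = 0 ∧ C * Aᴴ + D * Bᴴ = 0 ∧
        C * Cᴴ + D * Dᴴ = 1 := by
  rw [fromBlocks_conjTranspose, fromBlocks_multiply, ← fromBlocks_one, fromBlocks_inj]

end Blocks

section Transfer

variable {m n K : Type*} [Fintype m] [DecidableEq m] [Fintype n] [DecidableEq n] [CommRing K]

theorem isUnit_add_mul_mul {A : Matrix n n K} {U : Matrix n m K} {C : Matrix m m K}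
    {V : Matrix m n K} (hA : IsUnit A) (hC : IsUnit C) (hAC : IsUnit (C⁻¹ + V * A⁻¹ * U)) :
    IsUnit (A + U * C * V) := by
  obtain ⟨_⟩ := hA.nonempty_invertible
  obtain ⟨_⟩ := hC.nonempty_invertible
  obtain ⟨iAC⟩ := hAC.nonempty_invertible
  simp only [← invOf_eq_nonsing_inv] at iAC
  exact @isUnit_of_invertible _ _ _ (invertibleAddMulMul A U C V)

noncomputable def transferMatrix (A : Matrix n n K) (B : Matrix n m K) (C : Matrix m n K)
    (D : Matrix m m K) (z : K) : Matrix m m K :=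
  C * (z • 1 - A)⁻¹ * B + D

variable {A : Matrix n n K} {B : Matrix n m K} {C : Matrix m n K} {D : Matrix m m K} {z : K}

variable (B C D) in
theorem inv_inv_smul_one_sub_add (hzA : IsUnit (z • 1 - A)) :
    (z • 1 - A)⁻¹⁻¹ + B * D⁻¹ * C = z • 1 - (A - B * D⁻¹ * C) := by
  rw [nonsing_inv_nonsing_inv _ ((isUnit_iff_isUnit_det _).mp hzA)]
  abel

theorem isUnit_transferMatrix (hD : IsUnit D) (hzA : IsUnit (z • 1 - A))
    (hzF : IsUnit (z • 1 - (A - B * D⁻¹ * C))) : IsUnit (transferMatrix A B C D z) := by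
  rw [transferMatrix, add_comm]
  exact isUnit_add_mul_mul hD (isUnit_nonsing_inv_iff.mpr hzA)
    (inv_inv_smul_one_sub_add B C D hzA ▸ hzF)

theorem inv_transferMatrix (hD : IsUnit D) (hzA : IsUnit (z • 1 - A))
    (hzF : IsUnit (z • 1 - (A - B * D⁻¹ * C))) :
    (transferMatrix A B C D z)⁻¹ = D⁻¹ - D⁻¹ * C * (z • 1 - (A - B * D⁻¹ * C))⁻¹ * B * D⁻¹ := by
  rw [transferMatrix, add_comm, add_mul_mul_inv_eq_sub _ _ _ _ hD
    (isUnit_nonsing_inv_iff.mpr hzA) (inv_inv_smul_one_sub_add B C D hzA ▸ hzF),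
    inv_inv_smul_one_sub_add B C D hzA]

end Transfer

section Resolvent

variable {n : Type*} [Fintype n] [DecidableEq n] {A F : Matrix n n ℂ}

theorem isUnit_smul_one_sub_of_one_le_norm (hA : ∀ μ ∈ spectrum ℂ A, ‖μ‖ < 1) {z : ℂ}
    (hz : 1 ≤ ‖z‖) : IsUnit (z • 1 - A) := by
  rw [← Algebra.algebraMap_eq_smul_one]
  exact spectrum.notMem_iff.mp fun h => (hA z h).not_ge hz

theorem isUnit_one_sub_smul_of_norm_le_one (hA : ∀ μ ∈ spectrum ℂ A, ‖μ‖ < 1) {w : ℂ}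
    (hw : ‖w‖ ≤ 1) : IsUnit (1 - w • A) := by
  rcases eq_or_ne w 0 with rfl | hw0
  · simp
  have h : IsUnit (w⁻¹ • 1 - A) := isUnit_smul_one_sub_of_one_le_norm hA <| by
    rw [norm_inv]
    exact (one_le_inv₀ (norm_pos_iff.mpr hw0)).mpr hw
  have h' := h.smul (Units.mk0 w hw0)
  rwa [Units.smul_def, Units.val_mk0, smul_sub, smul_smul, mul_inv_cancel₀ hw0, one_smul] at h'

theorem isUnit_smul_one_sub_inv_conjTranspose (hA : ∀ μ ∈ spectrum ℂ A, ‖μ‖ < 1)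
    (hAu : IsUnit A) {z : ℂ} (hz : ‖z‖ ≤ 1) : IsUnit (z • 1 - (Aᴴ)⁻¹) := by
  have hAH : IsUnit Aᴴ.det := (isUnit_iff_isUnit_det _).mp ((isUnit_conjTranspose A).mpr hAu)
  have h : z • 1 - (Aᴴ)⁻¹ = -((1 - star z • A)ᴴ * (Aᴴ)⁻¹) := by
    rw [conjTranspose_sub, conjTranspose_smul, star_star, conjTranspose_one, Matrix.sub_mul,
      Matrix.one_mul, Matrix.smul_mul, mul_nonsing_inv _ hAH, neg_sub]
  rw [h]
  refine (((isUnit_conjTranspose _).mpr ?_).mul (isUnit_nonsing_inv_iff.mpr ?_)).neg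
  · exact isUnit_one_sub_smul_of_norm_le_one hA (by rwa [norm_star])
  · exact (isUnit_conjTranspose A).mpr hAu

theorem mulVec_inv_smul_one_sub_mulVec {z : ℂ} (hz : IsUnit (z • 1 - F)) (u : n → ℂ) :
    F *ᵥ ((z • 1 - F)⁻¹ *ᵥ u) = z • ((z • 1 - F)⁻¹ *ᵥ u) - u := by
  have h : (z • 1 - F) *ᵥ ((z • 1 - F)⁻¹ *ᵥ u) = u := by
    rw [mulVec_mulVec, mul_nonsing_inv _ ((isUnit_iff_isUnit_det _).mp hz), one_mulVec]
  rw [sub_mulVec, smul_mulVec, one_mulVec] at h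
  exact eq_sub_of_add_eq (sub_eq_iff_eq_add'.mp h).symm

theorem differentiableAt_dotProduct_inv_smul_one_sub_mulVec (x y : n → ℂ) {z : ℂ}
    (hz : IsUnit (z • 1 - F)) :
    DifferentiableAt ℂ (fun w : ℂ => x ⬝ᵥ ((w • 1 - F)⁻¹ *ᵥ y)) z := by
  open scoped Norms.Operator in
  let L : Matrix n n ℂ →ₗ[ℂ] ℂ :=
    { toFun := fun X => x ⬝ᵥ (X *ᵥ y)
      map_add' := fun X Y => by simp [add_mulVec]
      map_smul' := fun c X => by simp [smul_mulVec] }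
  have hL : (fun w : ℂ => x ⬝ᵥ ((w • 1 - F)⁻¹ *ᵥ y)) = L.toContinuousLinearMap ∘ resolvent F := by
    funext w
    simp [L, resolvent, Algebra.algebraMap_eq_smul_one, nonsing_inv_eq_ringInverse]
  rw [hL]
  refine L.toContinuousLinearMap.differentiableAt.comp z
    (spectrum.hasDerivAt_resolvent_const_left ?_).differentiableAt
  rwa [spectrum.mem_resolventSet_iff, Algebra.algebraMap_eq_smul_one]

end Resolvent

section SumNormSq

variable {m n k : Type*} [Fintype m] [Fintype n]

theorem ofReal_sum_norm_sq (w : n → ℂ) : ((∑ i, ‖w i‖ ^ 2 : ℝ) : ℂ) = star w ⬝ᵥ w := by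
  simp [dotProduct, Complex.conj_mul']

theorem star_dotProduct_conjTranspose_mul_mulVec (X : Matrix m n ℂ) (w : n → ℂ) :
    star w ⬝ᵥ ((Xᴴ * X) *ᵥ w) = ((∑ i, ‖(X *ᵥ w) i‖ ^ 2 : ℝ) : ℂ) := by
  rw [ofReal_sum_norm_sq, star_mulVec, ← dotProduct_mulVec, mulVec_mulVec]

theorem sum_norm_sq_conjTranspose_mulVec_add [Fintype k] [DecidableEq k] {A : Matrix k n ℂ}
    {B : Matrix k m ℂ} (h : A * Aᴴ + B * Bᴴ = 1) (w : k → ℂ) :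
    ∑ i, ‖(Aᴴ *ᵥ w) i‖ ^ 2 + ∑ i, ‖(Bᴴ *ᵥ w) i‖ ^ 2 = ∑ i, ‖w i‖ ^ 2 := by
  apply Complex.ofReal_injective
  rw [Complex.ofReal_add, ← star_dotProduct_conjTranspose_mul_mulVec,
    ← star_dotProduct_conjTranspose_mul_mulVec, conjTranspose_conjTranspose,
    conjTranspose_conjTranspose, ← dotProduct_add, ← add_mulVec, h, one_mulVec,
    ofReal_sum_norm_sq]

theorem sum_norm_smul_sub_sq_sub_sum_norm_sq {z : ℂ} (hz : ‖z‖ = 1) (u v : n → ℂ) :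
    ∑ i, ‖(z • v - u) i‖ ^ 2 - ∑ i, ‖v i‖ ^ 2 = (star u ⬝ᵥ u - 2 * (z * (star u ⬝ᵥ v))).re := by
  have hz' : z.re * z.re + z.im * z.im = 1 := by
    rw [← Complex.normSq_apply, ← Complex.sq_norm, hz, one_pow]
  simp only [dotProduct, Finset.mul_sum, ← Finset.sum_sub_distrib, Complex.re_sum]
  refine Finset.sum_congr rfl fun i _ => ?_
  simp only [Pi.sub_apply, Pi.smul_apply, Pi.star_apply, smul_eq_mul, Complex.sq_norm,
    Complex.normSq_apply, Complex.star_def, Complex.sub_re, Complex.sub_im, Complex.mul_re,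
    Complex.mul_im, Complex.conj_re, Complex.conj_im, Complex.re_ofNat, Complex.im_ofNat]
  linear_combination ((v i).re * (v i).re + (v i).im * (v i).im) * hz'

theorem sum_norm_sq_add_mul_sum_norm_smul_sub_sq (z : ℂ) (u v : n → ℂ) :
    ∑ i, ‖u i‖ ^ 2 + (‖z‖ ^ 2 - 1) * (∑ i, ‖(z • v - u) i‖ ^ 2 - ∑ i, ‖v i‖ ^ 2) =
      ∑ i, ‖(star z • (z • v - u) - v) i‖ ^ 2 := by
  simp only [Finset.mul_sum, ← Finset.sum_sub_distrib, ← Finset.sum_add_distrib]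
  refine Finset.sum_congr rfl fun i _ => ?_
  simp only [Pi.sub_apply, Pi.smul_apply, smul_eq_mul, Complex.sq_norm, Complex.normSq_apply,
    Complex.star_def, Complex.sub_re, Complex.sub_im, Complex.mul_re, Complex.mul_im,
    Complex.conj_re, Complex.conj_im]
  ring

end SumNormSq

section UnitaryRealization

variable {m n : Type*} [Fintype m] [DecidableEq m] [Fintype n] [DecidableEq n]
  {A : Matrix n n ℂ} {B : Matrix n m ℂ} {C : Matrix m n ℂ} {D : Matrix m m ℂ} {z : ℂ}

theorem inv_conjTranspose_eq_sub_of_mem_unitary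
    (hU : fromBlocks A B C D ∈ unitary (Matrix (n ⊕ m) (n ⊕ m) ℂ)) (hD : IsUnit D) :
    (Aᴴ)⁻¹ = A - B * D⁻¹ * C := by
  obtain ⟨h₁, h₂, -, -⟩ := fromBlocks_conjTranspose_mul_self_eq_one_iff.mp hU.1
  apply inv_eq_right_inv
  rw [Matrix.mul_sub, ← Matrix.mul_assoc, ← Matrix.mul_assoc, eq_neg_of_add_eq_zero_left h₂,
    Matrix.neg_mul, Matrix.mul_assoc Cᴴ, mul_nonsing_inv _ ((isUnit_iff_isUnit_det D).mp hD),
    Matrix.mul_one, Matrix.neg_mul, sub_neg_eq_add, h₁]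

theorem inv_mul_eq_neg_conjTranspose_mul_inv_conjTranspose
    (hU : fromBlocks A B C D ∈ unitary (Matrix (n ⊕ m) (n ⊕ m) ℂ)) (hD : IsUnit D)
    (hAu : IsUnit A) : D⁻¹ * C = -(Bᴴ * (Aᴴ)⁻¹) := by
  obtain ⟨-, -, h₄, -⟩ := fromBlocks_mul_conjTranspose_self_eq_one_iff.mp hU.2
  have hAH : IsUnit Aᴴ.det := (isUnit_iff_isUnit_det _).mp ((isUnit_conjTranspose A).mpr hAu)
  calc D⁻¹ * C = D⁻¹ * (C * Aᴴ) * (Aᴴ)⁻¹ := by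
        rw [Matrix.mul_assoc, Matrix.mul_assoc, mul_nonsing_inv _ hAH, Matrix.mul_one]
    _ = -(Bᴴ * (Aᴴ)⁻¹) := by
        rw [eq_neg_of_add_eq_zero_left h₄, Matrix.mul_neg, ← Matrix.mul_assoc,
          nonsing_inv_mul _ ((isUnit_iff_isUnit_det D).mp hD), Matrix.one_mul, Matrix.neg_mul]

theorem isUnit_transferMatrix_of_mem_unitary
    (hU : fromBlocks A B C D ∈ unitary (Matrix (n ⊕ m) (n ⊕ m) ℂ)) (hD : IsUnit D)
    (hzA : IsUnit (z • 1 - A)) (hzF : IsUnit (z • 1 - (Aᴴ)⁻¹)) :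
    IsUnit (transferMatrix A B C D z) :=
  isUnit_transferMatrix hD hzA (inv_conjTranspose_eq_sub_of_mem_unitary hU hD ▸ hzF)

theorem inv_transferMatrix_sub_inv_of_mem_unitary
    (hU : fromBlocks A B C D ∈ unitary (Matrix (n ⊕ m) (n ⊕ m) ℂ)) (hD : IsUnit D)
    (hAu : IsUnit A) (hzA : IsUnit (z • 1 - A)) (hzF : IsUnit (z • 1 - (Aᴴ)⁻¹)) :
    (transferMatrix A B C D z)⁻¹ - D⁻¹ = Bᴴ * (Aᴴ)⁻¹ * (z • 1 - (Aᴴ)⁻¹)⁻¹ * (B * D⁻¹) := by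
  have hF := inv_conjTranspose_eq_sub_of_mem_unitary hU hD
  rw [inv_transferMatrix hD hzA (hF ▸ hzF), ← hF, sub_sub_cancel_left]
  calc -(D⁻¹ * C * (z • 1 - (Aᴴ)⁻¹)⁻¹ * B * D⁻¹)
      = -(D⁻¹ * C * (z • 1 - (Aᴴ)⁻¹)⁻¹ * (B * D⁻¹)) := by simp only [Matrix.mul_assoc]
    _ = _ := by
      rw [inv_mul_eq_neg_conjTranspose_mul_inv_conjTranspose hU hD hAu, Matrix.neg_mul,
        Matrix.neg_mul, neg_neg]

theorem sum_norm_sq_inv_transferMatrix_sub_inv_mulVec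
    (hU : fromBlocks A B C D ∈ unitary (Matrix (n ⊕ m) (n ⊕ m) ℂ)) (hD : IsUnit D)
    (hAu : IsUnit A) (hzA : IsUnit (z • 1 - A)) (hzF : IsUnit (z • 1 - (Aᴴ)⁻¹)) (e : m → ℂ) :
    ∑ i, ‖(((transferMatrix A B C D z)⁻¹ - D⁻¹) *ᵥ e) i‖ ^ 2 =
      ∑ i, ‖(z • ((z • 1 - (Aᴴ)⁻¹)⁻¹ *ᵥ ((B * D⁻¹) *ᵥ e)) - (B * D⁻¹) *ᵥ e : n → ℂ) i‖ ^ 2 -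
        ∑ i, ‖((z • 1 - (Aᴴ)⁻¹)⁻¹ *ᵥ ((B * D⁻¹) *ᵥ e)) i‖ ^ 2 := by
  obtain ⟨h₃, -, -, -⟩ := fromBlocks_mul_conjTranspose_self_eq_one_iff.mp hU.2
  have hAF (w : n → ℂ) : Aᴴ *ᵥ ((Aᴴ)⁻¹ *ᵥ w) = w := by
    rw [mulVec_mulVec, mul_nonsing_inv _
      ((isUnit_iff_isUnit_det _).mp ((isUnit_conjTranspose A).mpr hAu)), one_mulVec]
  have hv : ((transferMatrix A B C D z)⁻¹ - D⁻¹) *ᵥ e =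
      Bᴴ *ᵥ ((Aᴴ)⁻¹ *ᵥ ((z • 1 - (Aᴴ)⁻¹)⁻¹ *ᵥ ((B * D⁻¹) *ᵥ e))) := by
    simp only [inv_transferMatrix_sub_inv_of_mem_unitary hU hD hAu hzA hzF, mulVec_mulVec,
      Matrix.mul_assoc]
  rw [hv, ← mulVec_inv_smul_one_sub_mulVec hzF, ← sum_norm_sq_conjTranspose_mulVec_add h₃,
    hAF, add_sub_cancel_left]

theorem integral_sum_norm_sq_inv_transferMatrix_sub_inv
    (hU : fromBlocks A B C D ∈ unitary (Matrix (n ⊕ m) (n ⊕ m) ℂ)) (hD : IsUnit D)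
    (hA : ∀ μ ∈ spectrum ℂ A, ‖μ‖ < 1) (hAu : IsUnit A) (e : m → ℂ) :
    1 / (2 * Real.pi) * ∫ θ in -Real.pi..Real.pi,
        ∑ i, ‖(((transferMatrix A B C D (Complex.exp (Complex.I * θ)))⁻¹ - D⁻¹) *ᵥ e) i‖ ^ 2 =
      ∑ i, ‖((B * D⁻¹) *ᵥ e) i‖ ^ 2 := by
  set u := (B * D⁻¹) *ᵥ e
  have hdisk (z : ℂ) (hz : ‖z‖ ≤ 1) : IsUnit (z • 1 - (Aᴴ)⁻¹) :=
    isUnit_smul_one_sub_inv_conjTranspose hA hAu hz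
  let G (z : ℂ) : ℂ := star u ⬝ᵥ u - 2 * (z * (star u ⬝ᵥ ((z • 1 - (Aᴴ)⁻¹)⁻¹ *ᵥ u)))
  have hG : DiffContOnCl ℂ G (Metric.ball 0 1) := by
    refine DifferentiableOn.diffContOnCl fun z hz => ?_
    rw [closure_ball _ one_ne_zero, Metric.mem_closedBall, dist_zero_right] at hz
    exact (((differentiableAt_id.mul (differentiableAt_dotProduct_inv_smul_one_sub_mulVec _ _
      (hdisk z hz))).const_mul 2).const_sub _).differentiableWithinAt
  have hcost (θ : ℝ) :
      ∑ i, ‖(((transferMatrix A B C D (Complex.exp (Complex.I * θ)))⁻¹ - D⁻¹) *ᵥ e) i‖ ^ 2 =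
        (G (Complex.exp (Complex.I * θ))).re := by
    have hθ := Complex.norm_exp_I_mul_ofReal θ
    rw [sum_norm_sq_inv_transferMatrix_sub_inv_mulVec hU hD hAu
      (isUnit_smul_one_sub_of_one_le_norm hA hθ.ge) (hdisk _ hθ.le),
      sum_norm_smul_sub_sq_sub_sum_norm_sq hθ]
  simp only [hcost]
  rw [hG.integral_re_comp_exp_mul_I]
  simp only [G, zero_mul, mul_zero, sub_zero, ← ofReal_sum_norm_sq, Complex.ofReal_re]

theorem sum_norm_sq_add_mul_sum_norm_sq_inv_transferMatrix_sub_inv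
    (hU : fromBlocks A B C D ∈ unitary (Matrix (n ⊕ m) (n ⊕ m) ℂ)) (hD : IsUnit D)
    (hAu : IsUnit A) (hzA : IsUnit (z • 1 - A)) (hzF : IsUnit (z • 1 - (Aᴴ)⁻¹)) (e : m → ℂ) :
    ∑ i, ‖((B * D⁻¹) *ᵥ e) i‖ ^ 2 +
        (‖z‖ ^ 2 - 1) * ∑ i, ‖(((transferMatrix A B C D z)⁻¹ - D⁻¹) *ᵥ e) i‖ ^ 2 =
      ∑ i, ‖(((star z • (Aᴴ)⁻¹ - 1) * (z • 1 - (Aᴴ)⁻¹)⁻¹ * (B * D⁻¹)) *ᵥ e) i‖ ^ 2 := by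
  rw [sum_norm_sq_inv_transferMatrix_sub_inv_mulVec hU hD hAu hzA hzF,
    sum_norm_sq_add_mul_sum_norm_smul_sub_sq, ← mulVec_mulVec e _ (B * D⁻¹),
    ← mulVec_mulVec _ (star z • _ - 1), sub_mulVec,
    smul_mulVec, one_mulVec, mulVec_inv_smul_one_sub_mulVec hzF]

end UnitaryRealization

theorem star_dotProduct_mulVec_eq_sum_norm_sq_mulVec {m n : Type*} [Fintype m]
    [DecidableEq m] [Fintype n] [DecidableEq n] (A : Matrix n n ℂ) (B : Matrix n m ℂ)
    (D : Matrix m m ℂ) (z : ℂ) (e : m → ℂ) :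
    star e ⬝ᵥ (((Dᴴ)⁻¹ * Bᴴ * (star z • 1 - A⁻¹)⁻¹ * (z • A⁻¹ - 1) * (star z • (Aᴴ)⁻¹ - 1) *
        (z • 1 - (Aᴴ)⁻¹)⁻¹ * B * D⁻¹) *ᵥ e) =
      ((∑ i, ‖(((star z • (Aᴴ)⁻¹ - 1) * (z • 1 - (Aᴴ)⁻¹)⁻¹ * (B * D⁻¹)) *ᵥ e) i‖ ^ 2 : ℝ) : ℂ) := by
  rw [← star_dotProduct_conjTranspose_mul_mulVec]
  simp only [conjTranspose_mul, conjTranspose_sub, conjTranspose_smul, conjTranspose_one,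
    conjTranspose_nonsing_inv, conjTranspose_conjTranspose, star_star, Matrix.mul_assoc]

end Matrix

theorem stmt16_general {n m : ℕ} (A : Matrix (Fin n) (Fin n) ℂ)
    (B : Matrix (Fin n) (Fin m) ℂ) (C : Matrix (Fin m) (Fin n) ℂ)
    (D : Matrix (Fin m) (Fin m) ℂ)
    (hA : ∀ μ ∈ spectrum ℂ A, ‖μ‖ < 1)
    (hD : IsUnit D)
    (hU1 : (Matrix.fromBlocks A B C D)ᴴ * Matrix.fromBlocks A B C D = 1)
    (hU2 : Matrix.fromBlocks A B C D * (Matrix.fromBlocks A B C D)ᴴ = 1)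
    (hAinv : IsUnit A)
    (z₀ : ℂ)
    (h1 : IsUnit (z₀ • (1 : Matrix (Fin n) (Fin n) ℂ) - A))
    (h2 : IsUnit (z₀ • (1 : Matrix (Fin n) (Fin n) ℂ) - (Aᴴ)⁻¹))
    (j : Fin m) :
    (∀ θ : ℝ, IsUnit
        (C * (Complex.exp (Complex.I * θ) • (1 : Matrix (Fin n) (Fin n) ℂ) - A)⁻¹ * B + D)) ∧
    IsUnit (C * (z₀ • (1 : Matrix (Fin n) (Fin n) ℂ) - A)⁻¹ * B + D) ∧
    ((1 / (2 * Real.pi)) *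
        (∫ θ in (-Real.pi)..Real.pi,
          ∑ i : Fin m,
            ‖(((C * (Complex.exp (Complex.I * θ) • (1 : Matrix (Fin n) (Fin n) ℂ) - A)⁻¹ * B + D)⁻¹
                - D⁻¹) *ᵥ Pi.single j 1) i‖ ^ 2)
      + (‖z₀‖ ^ 2 - 1) *
          ∑ i : Fin m,
            ‖(((C * (z₀ • (1 : Matrix (Fin n) (Fin n) ℂ) - A)⁻¹ * B + D)⁻¹ - D⁻¹) *ᵥ
                Pi.single j 1) i‖ ^ 2 : ℝ)
      = (star (Pi.single j 1 : Fin m → ℂ) ⬝ᵥ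
          (((Dᴴ)⁻¹ * Bᴴ *
              ((starRingEnd ℂ z₀) • (1 : Matrix (Fin n) (Fin n) ℂ) - A⁻¹)⁻¹ *
              (z₀ • A⁻¹ - 1) *
              ((starRingEnd ℂ z₀) • (Aᴴ)⁻¹ - 1) *
              (z₀ • (1 : Matrix (Fin n) (Fin n) ℂ) - (Aᴴ)⁻¹)⁻¹ * B * D⁻¹) *ᵥ
            (Pi.single j 1 : Fin m → ℂ))) := by
  have hU : fromBlocks A B C D ∈ unitary (Matrix (Fin n ⊕ Fin m) (Fin n ⊕ Fin m) ℂ) := ⟨hU1, hU2⟩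
  simp only [← transferMatrix.eq_1]
  refine ⟨fun θ => isUnit_transferMatrix_of_mem_unitary hU hD
      (isUnit_smul_one_sub_of_one_le_norm hA (Complex.norm_exp_I_mul_ofReal θ).ge)
      (isUnit_smul_one_sub_inv_conjTranspose hA hAinv (Complex.norm_exp_I_mul_ofReal θ).le),
    isUnit_transferMatrix_of_mem_unitary hU hD h1 h2, ?_⟩
  rw [starRingEnd_apply, star_dotProduct_mulVec_eq_sum_norm_sq_mulVec,
    integral_sum_norm_sq_inv_transferMatrix_sub_inv hU hD hA hAinv,
    sum_norm_sq_add_mul_sum_norm_sq_inv_transferMatrix_sub_inv hU hD hAinv h1 h2]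

/-- **Closed form of the optimal cost `J_{Γ,j}` (equation (A.9) of the paper).**
For a stable inner transfer function `M(z) = C (zI − A)⁻¹ B + D` with unitary
realization block, invertible `A` and `D`, a point `z₀` with `|z₀| > 1` such
that `z₀ I − A` and `z₀ I − (Aᴴ)⁻¹` are invertible, and a standard basis
vector `e_j`:
`M(e^{iθ})` and `M(z₀)` are invertible, and
`(1/2π) ∫ ‖(M(e^{iθ})⁻¹ − D⁻¹) e_j‖² dθ + (|z₀|² − 1)·‖(M(z₀)⁻¹ − D⁻¹) e_j‖²
  = e_jᴴ (Dᴴ)⁻¹ Bᴴ (z̄₀ I − A⁻¹)⁻¹ (z₀ A⁻¹ − I)(z̄₀ (Aᴴ)⁻¹ − I)(z₀ I − (Aᴴ)⁻¹)⁻¹ B D⁻¹ e_j`. -/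
theorem stmt16 {n m : ℕ} (A : Matrix (Fin n) (Fin n) ℂ)
    (B : Matrix (Fin n) (Fin m) ℂ) (C : Matrix (Fin m) (Fin n) ℂ)
    (D : Matrix (Fin m) (Fin m) ℂ)
    (hA : ∀ μ ∈ spectrum ℂ A, ‖μ‖ < 1)
    (hD : IsUnit D)
    (hU1 : (Matrix.fromBlocks A B C D)ᴴ * Matrix.fromBlocks A B C D = 1)
    (hU2 : Matrix.fromBlocks A B C D * (Matrix.fromBlocks A B C D)ᴴ = 1)
    (hAinv : IsUnit A)
    (z₀ : ℂ) (hz₀ : 1 < ‖z₀‖)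
    (h1 : IsUnit (z₀ • (1 : Matrix (Fin n) (Fin n) ℂ) - A))
    (h2 : IsUnit (z₀ • (1 : Matrix (Fin n) (Fin n) ℂ) - (Aᴴ)⁻¹))
    (j : Fin m) :
    (∀ θ : ℝ, IsUnit
        (C * (Complex.exp (Complex.I * θ) • (1 : Matrix (Fin n) (Fin n) ℂ) - A)⁻¹ * B + D)) ∧
    IsUnit (C * (z₀ • (1 : Matrix (Fin n) (Fin n) ℂ) - A)⁻¹ * B + D) ∧
    ((1 / (2 * Real.pi)) *
        (∫ θ in (-Real.pi)..Real.pi,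
          ∑ i : Fin m,
            ‖(((C * (Complex.exp (Complex.I * θ) • (1 : Matrix (Fin n) (Fin n) ℂ) - A)⁻¹ * B + D)⁻¹
                - D⁻¹) *ᵥ Pi.single j 1) i‖ ^ 2)
      + (‖z₀‖ ^ 2 - 1) *
          ∑ i : Fin m,
            ‖(((C * (z₀ • (1 : Matrix (Fin n) (Fin n) ℂ) - A)⁻¹ * B + D)⁻¹ - D⁻¹) *ᵥ
                Pi.single j 1) i‖ ^ 2 : ℝ)
      = (star (Pi.single j 1 : Fin m → ℂ) ⬝ᵥ
          (((Dᴴ)⁻¹ * Bᴴ *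
              ((starRingEnd ℂ z₀) • (1 : Matrix (Fin n) (Fin n) ℂ) - A⁻¹)⁻¹ *
              (z₀ • A⁻¹ - 1) *
              ((starRingEnd ℂ z₀) • (Aᴴ)⁻¹ - 1) *
              (z₀ • (1 : Matrix (Fin n) (Fin n) ℂ) - (Aᴴ)⁻¹)⁻¹ * B * D⁻¹) *ᵥ
            (Pi.single j 1 : Fin m → ℂ))) :=
  stmt16_general A B C D hA hD hU1 hU2 hAinv z₀ h1 h2 j
end
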